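/- Let (Γ, μ) be a probability space and T : Γ → Γ a measure-preserving map. Let ε be a real number with 0 < ε ≤ 1. Let Γ_{M_1}, …, Γ_{M_n} be finitely many pairwise disjoint measurable sets whose union is Γ, and suppose one of them, Γ_{Eq}, satisfies μ(Γ_{Eq}) = 1 − ε. Then there exists a measurable set G ⊆ Γ with μ(G) > 1 − √ε such that for every x ∈ G and every index i, the Birkhoff time average Â_{Γ_{M_i}}(x) = lim_{n→∞} (1/n) ∑_{j=0}^{n−1} 1_{Γ_{M_i}}(T^j x) exists and satisfies |Â_{Γ_{M_i}}(x) − μ(Γ_{M_i})| ≤ √ε. -/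

import Mathlib

/-!
The time averages of a bounded observable converge almost everywhere (Birkhoff): by Garsia's
maximal lemma, on the `T`-invariant set where `liminf < a < b < limsup` the observable has mean
both `≥ b` and `≤ a`, so that set is null. The limit of the time average of `Γ_Eq` then has mean
`μ Γ_Eq = 1 - ε`, and Markov's inequality applied to `1 -` this limit shows that it drops below
`1 - √ε` only on a set of measure `< √ε`. Off that set the average of `Γ_Eq` and `μ Γ_Eq` both lie
in `[1 - √ε, 1]`; any other cell is disjoint from `Γ_Eq`, so its average and its measure both lie
in `[0, √ε]`.
-/

open MeasureTheory Filter Topology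

/-- The discrete Birkhoff time average up to time `n` of the set `A`
along the orbit of `x` under the map `T`. -/
noncomputable def birkhoffAvg {Γ : Type*} (T : Γ → Γ) (A : Set Γ) (n : ℕ) (x : Γ) : ℝ :=
  (n : ℝ)⁻¹ * ∑ i ∈ Finset.range n, A.indicator (fun _ => (1 : ℝ)) (T^[i] x)

section LimsupAddTendstoZero

variable {ι : Type*} {l : Filter ι} [l.NeBot] {u v : ι → ℝ}

lemma limsup_add_eq_of_tendsto_zero (hu : IsBoundedUnder (· ≤ ·) l u)
    (hu' : IsBoundedUnder (· ≥ ·) l u) (hv : Tendsto v l (𝓝 0)) :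
    limsup (u + v) l = limsup u l := by
  have hv_le : IsBoundedUnder (· ≤ ·) l v := hv.isBoundedUnder_le
  have hv_ge : IsBoundedUnder (· ≥ ·) l v := hv.isBoundedUnder_ge
  refine le_antisymm ?_ ?_
  · simpa [hv.limsup_eq] using limsup_add_le hu' hu hv_ge.isCoboundedUnder_le hv_le
  · simpa [hv.liminf_eq] using le_limsup_add hu hu'.isCoboundedUnder_le hv_le hv_ge

lemma liminf_add_eq_of_tendsto_zero (hu : IsBoundedUnder (· ≤ ·) l u)
    (hu' : IsBoundedUnder (· ≥ ·) l u) (hv : Tendsto v l (𝓝 0)) :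
    liminf (u + v) l = liminf u l := by
  have hv_le : IsBoundedUnder (· ≤ ·) l v := hv.isBoundedUnder_le
  have hv_ge : IsBoundedUnder (· ≥ ·) l v := hv.isBoundedUnder_ge
  refine le_antisymm ?_ ?_
  · simpa [add_comm u, hv.limsup_eq] using liminf_add_le hv_ge hv_le hu' hu.isCoboundedUnder_ge
  · simpa [hv.liminf_eq] using le_liminf_add hu' hu hv_ge hv_le.isCoboundedUnder_ge

end LimsupAddTendstoZero

section BirkhoffBounds

variable {α : Type*} {T : α → α} {f : α → ℝ} {C : ℝ}

lemma abs_birkhoffSum_le (hC : ∀ x, |f x| ≤ C) (n : ℕ) (x : α) :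
    |birkhoffSum T f n x| ≤ n * C :=
  calc |birkhoffSum T f n x| ≤ ∑ k ∈ Finset.range n, |f (T^[k] x)| :=
        Finset.abs_sum_le_sum_abs _ _
    _ ≤ ∑ _k ∈ Finset.range n, C := Finset.sum_le_sum fun k _ => hC _
    _ = n * C := by simp

lemma abs_birkhoffAverage_le (hC : ∀ x, |f x| ≤ C) (n : ℕ) (x : α) :
    |birkhoffAverage ℝ T f n x| ≤ C := by
  have hC0 : 0 ≤ C := (abs_nonneg _).trans (hC x)
  rcases n.eq_zero_or_pos with rfl | hn
  · simpa using hC0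
  · rw [birkhoffAverage, smul_eq_mul, abs_mul, abs_inv, Nat.abs_cast,
      inv_mul_le_iff₀ (by positivity)]
    exact abs_birkhoffSum_le hC n x

lemma isBoundedUnder_le_birkhoffAverage (hC : ∀ x, |f x| ≤ C) (x : α) :
    IsBoundedUnder (· ≤ ·) atTop (birkhoffAverage ℝ T f · x) :=
  isBoundedUnder_of ⟨C, fun n => (abs_le.1 (abs_birkhoffAverage_le hC n x)).2⟩

lemma isBoundedUnder_ge_birkhoffAverage (hC : ∀ x, |f x| ≤ C) (x : α) :
    IsBoundedUnder (· ≥ ·) atTop (birkhoffAverage ℝ T f · x) :=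
  isBoundedUnder_of ⟨-C, fun n => (abs_le.1 (abs_birkhoffAverage_le hC n x)).1⟩

lemma abs_limsup_birkhoffAverage_le (hC : ∀ x, |f x| ≤ C) (x : α) :
    |limsup (birkhoffAverage ℝ T f · x) atTop| ≤ C := by
  have h := fun n => abs_le.1 (abs_birkhoffAverage_le (T := T) hC n x)
  exact abs_le.2 ⟨le_limsup_of_frequently_le (.of_forall fun n => (h n).1)
    (isBoundedUnder_le_birkhoffAverage hC x), limsup_le_of_le
    (isBoundedUnder_ge_birkhoffAverage hC x).isCoboundedUnder_le (.of_forall fun n => (h n).2)⟩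

lemma tendsto_birkhoffAverage_apply_sub_birkhoffAverage_of_abs_le (hC : ∀ x, |f x| ≤ C)
    (x : α) :
    Tendsto (fun n => birkhoffAverage ℝ T f n (T x) - birkhoffAverage ℝ T f n x) atTop (𝓝 0) :=
  tendsto_birkhoffAverage_apply_sub_birkhoffAverage' ℝ
    (isBounded_iff_forall_norm_le.2 ⟨C, Set.forall_mem_range.2 hC⟩) T x

lemma limsup_birkhoffAverage_apply (hC : ∀ x, |f x| ≤ C) (x : α) :
    limsup (birkhoffAverage ℝ T f · (T x)) atTop = limsup (birkhoffAverage ℝ T f · x) atTop := by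
  convert limsup_add_eq_of_tendsto_zero (isBoundedUnder_le_birkhoffAverage hC x)
    (isBoundedUnder_ge_birkhoffAverage hC x)
    (tendsto_birkhoffAverage_apply_sub_birkhoffAverage_of_abs_le (T := T) hC x) using 2
  ext n
  simp

lemma liminf_birkhoffAverage_apply (hC : ∀ x, |f x| ≤ C) (x : α) :
    liminf (birkhoffAverage ℝ T f · (T x)) atTop = liminf (birkhoffAverage ℝ T f · x) atTop := by
  convert liminf_add_eq_of_tendsto_zero (isBoundedUnder_le_birkhoffAverage hC x)
    (isBoundedUnder_ge_birkhoffAverage hC x)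
    (tendsto_birkhoffAverage_apply_sub_birkhoffAverage_of_abs_le (T := T) hC x) using 2
  ext n
  simp

end BirkhoffBounds

lemma MeasureTheory.MeasurePreserving.integral_comp_of_measurable {α : Type*} [MeasurableSpace α]
    {μ : Measure α} {T : α → α} {g : α → ℝ} (hT : MeasurePreserving T μ μ) (hg : Measurable g) :
    ∫ x, g (T x) ∂μ = ∫ x, g x ∂μ := by
  rw [← integral_map hT.aemeasurable hg.aestronglyMeasurable, hT.map_eq]

lemma measurable_birkhoffAverage {α : Type*} [MeasurableSpace α] {T : α → α} {f : α → ℝ}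
    (hT : Measurable T) (hf : Measurable f) (n : ℕ) :
    Measurable (birkhoffAverage ℝ T f n) :=
  ((Finset.measurable_sum _ fun k _ => hf.comp (hT.iterate k)).const_smul (n : ℝ)⁻¹ :)

section MaximalErgodic

variable {α : Type*} {T : α → α} {g : α → ℝ} {C : ℝ}

/-- `maxBirkhoffSum T g N x = max (0, max_{1 ≤ n ≤ N} birkhoffSum T g n x)`. -/
noncomputable def maxBirkhoffSum (T : α → α) (g : α → ℝ) : ℕ → α → ℝ
  | 0 => 0
  | N + 1 => fun x => max (g x + maxBirkhoffSum T g N (T x)) 0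

lemma maxBirkhoffSum_nonneg : ∀ N x, 0 ≤ maxBirkhoffSum T g N x
  | 0, _ => le_rfl
  | _ + 1, _ => le_max_right _ _

lemma maxBirkhoffSum_le_succ : ∀ N x, maxBirkhoffSum T g N x ≤ maxBirkhoffSum T g (N + 1) x
  | 0, x => maxBirkhoffSum_nonneg 1 x
  | N + 1, x => max_le_max_right _ (add_le_add_right (maxBirkhoffSum_le_succ N (T x)) _)

lemma monotone_maxBirkhoffSum : Monotone (maxBirkhoffSum T g) :=
  monotone_nat_of_le_succ fun N x => maxBirkhoffSum_le_succ N x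

lemma birkhoffSum_le_maxBirkhoffSum : ∀ n x, birkhoffSum T g n x ≤ maxBirkhoffSum T g n x
  | 0, x => by simp [maxBirkhoffSum]
  | n + 1, x => by
    rw [birkhoffSum_succ']
    exact le_max_of_le_left (add_le_add_right (birkhoffSum_le_maxBirkhoffSum n (T x)) _)

lemma maxBirkhoffSum_le (hC : ∀ x, |g x| ≤ C) : ∀ N x, maxBirkhoffSum T g N x ≤ N * C
  | 0, x => by simp [maxBirkhoffSum]
  | N + 1, x => by
    have hC0 : 0 ≤ C := (abs_nonneg _).trans (hC x)
    have hN := maxBirkhoffSum_le hC N (T x)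
    have hgx := (abs_le.1 (hC x)).2
    push_cast
    exact max_le (by linarith) (by positivity)

lemma maxBirkhoffSum_sub_maxBirkhoffSum_apply_le (N : ℕ) (x : α) :
    maxBirkhoffSum T g N x - maxBirkhoffSum T g N (T x) ≤
      {y | 0 < maxBirkhoffSum T g N y}.indicator g x := by
  set A := {y | 0 < maxBirkhoffSum T g N y}
  by_cases hx : x ∈ A
  · rw [Set.indicator_of_mem hx]
    cases N with
    | zero => exact absurd (show (0 : ℝ) < 0 from hx) (lt_irrefl 0)
    | succ N =>
      have hval : maxBirkhoffSum T g (N + 1) x = g x + maxBirkhoffSum T g N (T x) :=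
        max_eq_left ((lt_max_iff.1 hx).resolve_right (lt_irrefl 0)).le
      linarith [maxBirkhoffSum_le_succ (T := T) (g := g) N (T x)]
  · rw [Set.indicator_of_notMem hx, le_antisymm (not_lt.1 hx) (maxBirkhoffSum_nonneg N x)]
    linarith [maxBirkhoffSum_nonneg (T := T) (g := g) N (T x)]

variable [MeasurableSpace α] {μ : Measure α}

lemma measurable_maxBirkhoffSum (hT : Measurable T) (hg : Measurable g) :
    ∀ N, Measurable (maxBirkhoffSum T g N)
  | 0 => measurable_const
  | N + 1 => (hg.add ((measurable_maxBirkhoffSum hT hg N).comp hT)).max measurable_const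

lemma integrable_maxBirkhoffSum [IsFiniteMeasure μ] (hT : Measurable T) (hg : Measurable g)
    (hC : ∀ x, |g x| ≤ C) (N : ℕ) : Integrable (maxBirkhoffSum T g N) μ :=
  .of_bound (measurable_maxBirkhoffSum hT hg N).aestronglyMeasurable (N * C) <|
    ae_of_all _ fun x => by
      rw [Real.norm_eq_abs, abs_of_nonneg (maxBirkhoffSum_nonneg N x)]
      exact maxBirkhoffSum_le hC N x

theorem setIntegral_maxBirkhoffSum_pos_nonneg [IsFiniteMeasure μ] (hT : MeasurePreserving T μ μ)
    (hg : Measurable g) (hC : ∀ x, |g x| ≤ C) (N : ℕ) :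
    0 ≤ ∫ x in {x | 0 < maxBirkhoffSum T g N x}, g x ∂μ := by
  have hA : MeasurableSet {x | 0 < maxBirkhoffSum T g N x} :=
    measurableSet_lt measurable_const (measurable_maxBirkhoffSum hT.measurable hg N)
  have hM := integrable_maxBirkhoffSum (μ := μ) hT.measurable hg hC N
  have hgi : Integrable g μ :=
    .of_bound hg.aestronglyMeasurable C (ae_of_all _ hC)
  have hMT : Integrable (fun x => maxBirkhoffSum T g N (T x)) μ :=
    hT.integrable_comp_of_integrable hM
  rw [← integral_indicator hA]
  calc 0 = ∫ x, (maxBirkhoffSum T g N x - maxBirkhoffSum T g N (T x)) ∂μ := by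
        rw [integral_sub hM hMT,
          hT.integral_comp_of_measurable (measurable_maxBirkhoffSum hT.measurable hg N), sub_self]
    _ ≤ _ := integral_mono (hM.sub hMT) (hgi.indicator hA)
        (maxBirkhoffSum_sub_maxBirkhoffSum_apply_le N)

end MaximalErgodic

section Birkhoff

variable {α : Type*} [MeasurableSpace α] {μ : Measure α} [IsFiniteMeasure μ] {T : α → α}
  {f g : α → ℝ} {C : ℝ} {E : Set α}

theorem setIntegral_nonneg_of_exists_birkhoffSum_pos (hT : MeasurePreserving T μ μ)
    (hg : Measurable g) (hC : ∀ x, |g x| ≤ C) (hE : MeasurableSet E) (hinv : T ⁻¹' E = E)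
    (hpos : ∀ x ∈ E, ∃ n, 0 < birkhoffSum T g n x) : 0 ≤ ∫ x in E, g x ∂μ := by
  have hTE : MeasurePreserving T (μ.restrict E) (μ.restrict E) := by
    simpa only [hinv] using hT.restrict_preimage hE
  set A : ℕ → Set α := fun N => {x | 0 < maxBirkhoffSum T g N x}
  have hA : ∀ N, MeasurableSet (A N) := fun N =>
    measurableSet_lt measurable_const (measurable_maxBirkhoffSum hT.measurable hg N)
  have hEA : E ⊆ ⋃ N, A N := fun x hx =>
    let ⟨n, hn⟩ := hpos x hx
    Set.mem_iUnion.2 ⟨n, hn.trans_le (birkhoffSum_le_maxBirkhoffSum n x)⟩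
  have hgi : Integrable g (μ.restrict E) := .of_bound hg.aestronglyMeasurable C (ae_of_all _ hC)
  have hlim := tendsto_setIntegral_of_monotone hA
    (fun M N hMN x hx => hx.trans_le (monotone_maxBirkhoffSum hMN x)) hgi.integrableOn
  have := ge_of_tendsto' hlim fun N => setIntegral_maxBirkhoffSum_pos_nonneg hTE hg hC N
  rwa [Measure.restrict_restrict (.iUnion hA), Set.inter_eq_self_of_subset_right hEA] at this

lemma mul_measureReal_le_setIntegral_of_frequently_lt (hT : MeasurePreserving T μ μ)
    (hf : Measurable f) (hC : ∀ x, |f x| ≤ C) (hE : MeasurableSet E) (hinv : T ⁻¹' E = E)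
    {b : ℝ} (hfreq : ∀ x ∈ E, ∃ᶠ n in atTop, b < birkhoffAverage ℝ T f n x) :
    μ.real E * b ≤ ∫ x in E, f x ∂μ := by
  have hpos : ∀ x ∈ E, ∃ n, 0 < birkhoffSum T (fun y => f y - b) n x := by
    intro x hx
    obtain ⟨n, hn, hbn⟩ := (hfreq x hx).forall_exists_of_atTop 1
    have hS : birkhoffSum T (fun y => f y - b) n x = birkhoffSum T f n x - n * b := by
      simp [birkhoffSum, Finset.sum_sub_distrib]
    rw [birkhoffAverage, smul_eq_mul, lt_inv_mul_iff₀ (by exact_mod_cast hn)] at hbn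
    exact ⟨n, by rw [hS]; linarith⟩
  have hbound : ∀ x, |f x - b| ≤ C + |b| := fun x =>
    (abs_sub _ _).trans (add_le_add_left (hC x) _)
  have hfi : IntegrableOn f E μ := Integrable.of_bound hf.aestronglyMeasurable C (ae_of_all _ hC)
  have := setIntegral_nonneg_of_exists_birkhoffSum_pos (g := fun y => f y - b) hT
    (hf.sub measurable_const) hbound hE hinv hpos
  rwa [integral_sub hfi (integrableOn_const (measure_ne_top μ E)), setIntegral_const, smul_eq_mul,
    sub_nonneg] at this

lemma measure_liminf_lt_lt_limsup_birkhoffAverage (hT : MeasurePreserving T μ μ)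
    (hf : Measurable f) (hC : ∀ x, |f x| ≤ C) {a b : ℝ} (hab : a < b) :
    μ {x | liminf (birkhoffAverage ℝ T f · x) atTop < a ∧
      b < limsup (birkhoffAverage ℝ T f · x) atTop} = 0 := by
  set E := {x | liminf (birkhoffAverage ℝ T f · x) atTop < a ∧
      b < limsup (birkhoffAverage ℝ T f · x) atTop}
  have hmeas := measurable_birkhoffAverage hT.measurable hf
  have hE : MeasurableSet E :=
    (measurableSet_lt (.liminf hmeas) measurable_const).inter
      (measurableSet_lt measurable_const (.limsup hmeas))
  have hinv : T ⁻¹' E = E := by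
    ext x
    simp only [E, Set.preimage_ofPred_eq, limsup_birkhoffAverage_apply hC,
      liminf_birkhoffAverage_apply hC]
  have hb := mul_measureReal_le_setIntegral_of_frequently_lt hT hf hC hE hinv fun x hx =>
    frequently_lt_of_lt_limsup (isBoundedUnder_ge_birkhoffAverage hC x).isCoboundedUnder_le hx.2
  have ha := mul_measureReal_le_setIntegral_of_frequently_lt (f := -f) (b := -a) hT hf.neg
    (by simpa using hC) hE hinv fun x hx => by
      simpa [birkhoffAverage_neg] using frequently_lt_of_liminf_lt
        (isBoundedUnder_le_birkhoffAverage hC x).isCoboundedUnder_ge hx.1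
  rw [Pi.neg_def, integral_neg] at ha
  -- `μ.real E * b ≤ ∫ x in E, f x ∂μ ≤ μ.real E * a` with `a < b`
  have : μ.real E = 0 := by nlinarith [measureReal_nonneg (μ := μ) (s := E)]
  exact (measureReal_eq_zero_iff).1 this

theorem ae_tendsto_birkhoffAverage (hT : MeasurePreserving T μ μ) (hf : Measurable f)
    (hC : ∀ x, |f x| ≤ C) :
    ∀ᵐ x ∂μ, ∃ c, Tendsto (birkhoffAverage ℝ T f · x) atTop (𝓝 c) := by
  have h : ∀ᵐ x ∂μ, ∀ a b : ℚ, (a : ℝ) < b → ¬ (liminf (birkhoffAverage ℝ T f · x) atTop < a ∧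
      b < limsup (birkhoffAverage ℝ T f · x) atTop) := by
    refine ae_all_iff.2 fun a => ae_all_iff.2 fun b => ?_
    by_cases hab : (a : ℝ) < b
    · filter_upwards [measure_eq_zero_iff_ae_notMem.1
        (measure_liminf_lt_lt_limsup_birkhoffAverage hT hf hC hab)] with x hx _ using hx
    · exact ae_of_all _ fun x h => absurd h hab
  filter_upwards [h] with x hx
  have hle := isBoundedUnder_le_birkhoffAverage (T := T) hC x
  have hge := isBoundedUnder_ge_birkhoffAverage (T := T) hC x
  refine ⟨_, tendsto_of_liminf_eq_limsup ?_ rfl hle hge⟩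
  refine (liminf_le_limsup hle hge).antisymm (not_lt.1 fun hlt => ?_)
  obtain ⟨a, ha, hab⟩ := exists_rat_btwn hlt
  obtain ⟨b, hab', hb⟩ := exists_rat_btwn hab
  exact hx a b (by exact_mod_cast hab') ⟨ha, hb⟩

end Birkhoff

section IntegralOfTimeAverage

variable {α : Type*} [MeasurableSpace α] {μ : Measure α} {T : α → α} {f : α → ℝ} {C : ℝ}

lemma integral_birkhoffAverage (hT : MeasurePreserving T μ μ) (hf : Measurable f)
    (hfi : Integrable f μ) {n : ℕ} (hn : n ≠ 0) :
    ∫ x, birkhoffAverage ℝ T f n x ∂μ = ∫ x, f x ∂μ := by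
  have hcomp (k : ℕ) : ∫ x, f (T^[k] x) ∂μ = ∫ x, f x ∂μ :=
    (hT.iterate k).integral_comp_of_measurable hf
  simp only [birkhoffAverage, birkhoffSum, smul_eq_mul]
  rw [integral_const_mul,
    integral_finsetSum (f := fun k x => f (T^[k] x)) _
      fun k _ => (hT.iterate k).integrable_comp_of_integrable hfi]
  simp [hcomp, hn]

lemma integral_limsup_birkhoffAverage [IsFiniteMeasure μ] (hT : MeasurePreserving T μ μ)
    (hf : Measurable f) (hC : ∀ x, |f x| ≤ C) :
    ∫ x, limsup (birkhoffAverage ℝ T f · x) atTop ∂μ = ∫ x, f x ∂μ := by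
  have hlim : ∀ᵐ x ∂μ, Tendsto (birkhoffAverage ℝ T f · x) atTop
      (𝓝 (limsup (birkhoffAverage ℝ T f · x) atTop)) :=
    (ae_tendsto_birkhoffAverage hT hf hC).mono fun x ⟨_, hc⟩ => hc.limsup_eq ▸ hc
  have hfi : Integrable f μ := .of_bound hf.aestronglyMeasurable C (ae_of_all _ hC)
  refine tendsto_nhds_unique (tendsto_integral_of_dominated_convergence (fun _ => C)
    (fun n => (measurable_birkhoffAverage hT.measurable hf n).aestronglyMeasurable)
    (integrable_const C) (fun n => ae_of_all _ (abs_birkhoffAverage_le hC n)) hlim) ?_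
  refine tendsto_const_nhds.congr' ?_
  filter_upwards [eventually_ne_atTop 0] with n hn using
    (integral_birkhoffAverage hT hf hfi hn).symm

end IntegralOfTimeAverage

section Probability

variable {α : Type*} [MeasurableSpace α] {μ : Measure α}

lemma measureReal_setOf_lt_mul_lt_integral {g : α → ℝ} {t : ℝ}
    (ht : 0 ≤ t) (hg : Integrable g μ) (hg0 : 0 ≤ᵐ[μ] g) (hpos : 0 < ∫ x, g x ∂μ) :
    μ.real {x | t < g x} * t < ∫ x, g x ∂μ := by
  by_cases h0 : μ {x | t < g x} = 0
  · simpa [measureReal_def, h0] using hpos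
  · calc _ < ∫ x in {x | t < g x}, g x ∂μ := setIntegral_gt_gt ht hg.integrableOn h0
      _ ≤ ∫ x, g x ∂μ := setIntegral_le_integral hg hg0

lemma ofReal_one_sub_lt_measure_diff [IsProbabilityMeasure μ] {s t : Set α} {r : ℝ}
    (hs : μ sᶜ = 0) (ht : MeasurableSet t) (htr : μ.real t < r) (hr : r ≤ 1) :
    ENNReal.ofReal (1 - r) < μ (s \ t) := by
  rw [Set.sdiff_eq, Set.inter_comm, measure_inter_conull hs,
    ENNReal.ofReal_lt_iff_lt_toReal (by linarith) (measure_ne_top _ _), ← measureReal_def,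
    probReal_compl_eq_one_sub ht]
  linarith

end Probability

section TimeAverageOfSet

variable {Γ : Type*} {T : Γ → Γ} {A B : Set Γ} {x : Γ} {a b t : ℝ}

lemma birkhoffAvg_eq_birkhoffAverage (n : ℕ) :
    birkhoffAvg T A n x = birkhoffAverage ℝ T (A.indicator 1) n x :=
  rfl

lemma abs_indicator_one_le (x : Γ) : |A.indicator (1 : Γ → ℝ) x| ≤ 1 := by
  by_cases hx : x ∈ A <;> simp [hx]

lemma birkhoffAvg_nonneg (n : ℕ) : 0 ≤ birkhoffAvg T A n x :=
  mul_nonneg (by positivity)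
    (Finset.sum_nonneg fun _ _ => Set.indicator_nonneg (fun _ _ => zero_le_one) _)

lemma birkhoffAvg_le_one (n : ℕ) : birkhoffAvg T A n x ≤ 1 :=
  (abs_le.1 (abs_birkhoffAverage_le abs_indicator_one_le n x)).2

lemma birkhoffAvg_add_birkhoffAvg_le_one (hAB : Disjoint A B) (n : ℕ) :
    birkhoffAvg T A n x + birkhoffAvg T B n x ≤ 1 := by
  have h := birkhoffAvg_le_one (T := T) (A := A ∪ B) (x := x) n
  rwa [birkhoffAvg_eq_birkhoffAverage, Set.indicator_union_of_disjoint hAB,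
    ← Pi.add_def, birkhoffAverage_add] at h

lemma limsup_birkhoffAvg_le_one : limsup (birkhoffAvg T A · x) atTop ≤ 1 :=
  (abs_le.1 (abs_limsup_birkhoffAverage_le abs_indicator_one_le x)).2

variable [MeasurableSpace Γ] {μ : Measure Γ}

lemma measurable_birkhoffAvg (hT : Measurable T) (hA : MeasurableSet A) (n : ℕ) :
    Measurable (birkhoffAvg T A n) :=
  measurable_birkhoffAverage hT (measurable_const.indicator hA) n

lemma ae_exists_tendsto_birkhoffAvg [IsFiniteMeasure μ] (hT : MeasurePreserving T μ μ)
    (hA : MeasurableSet A) : ∀ᵐ x ∂μ, ∃ L, Tendsto (birkhoffAvg T A · x) atTop (𝓝 L) :=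
  ae_tendsto_birkhoffAverage hT (measurable_const.indicator hA) abs_indicator_one_le

lemma integral_limsup_birkhoffAvg [IsFiniteMeasure μ] (hT : MeasurePreserving T μ μ)
    (hA : MeasurableSet A) : ∫ x, limsup (birkhoffAvg T A · x) atTop ∂μ = μ.real A :=
  (integral_limsup_birkhoffAverage hT (measurable_const.indicator hA) abs_indicator_one_le).trans
    (integral_indicator_one hA)

/-- Markov's inequality for `1 - limsup (birkhoffAvg T A · x)`, whose mean is `1 - μ.real A`. -/
lemma measureReal_limsup_birkhoffAvg_lt_mul_lt [IsProbabilityMeasure μ]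
    (hT : MeasurePreserving T μ μ) (hA : MeasurableSet A) (ht : 0 ≤ t) (hA1 : μ.real A < 1) :
    μ.real {x | limsup (birkhoffAvg T A · x) atTop < 1 - t} * t < 1 - μ.real A := by
  set L := fun x => limsup (birkhoffAvg T A · x) atTop
  have hLi : Integrable L μ :=
    .of_bound (Measurable.limsup (measurable_birkhoffAvg hT.measurable hA)).aestronglyMeasurable 1
      (ae_of_all _ (abs_limsup_birkhoffAverage_le abs_indicator_one_le))
  have hint : ∫ x, (1 - L x) ∂μ = 1 - μ.real A := by
    rw [integral_sub (integrable_const 1) hLi, integral_limsup_birkhoffAvg hT hA]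
    simp
  have h := measureReal_setOf_lt_mul_lt_integral (g := fun x => 1 - L x) ht
    ((integrable_const 1).sub hLi)
    (ae_of_all _ fun x => sub_nonneg.2 limsup_birkhoffAvg_le_one) (hint ▸ sub_pos.2 hA1)
  rw [hint] at h
  convert h using 3
  ext x
  exact lt_sub_comm (a := L x)

variable [IsProbabilityMeasure μ]

lemma abs_sub_measureReal_le_of_one_sub_le (hb : Tendsto (birkhoffAvg T B · x) atTop (𝓝 b))
    (hbt : 1 - t ≤ b) (hBt : 1 - t ≤ μ.real B) : |b - μ.real B| ≤ t := by
  simpa using abs_sub_le_of_le_of_le hbt (le_of_tendsto' hb birkhoffAvg_le_one) hBt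
    measureReal_le_one

lemma abs_sub_measureReal_le_of_disjoint (hAB : Disjoint A B) (hB : MeasurableSet B)
    (ha : Tendsto (birkhoffAvg T A · x) atTop (𝓝 a))
    (hb : Tendsto (birkhoffAvg T B · x) atTop (𝓝 b))
    (hbt : 1 - t ≤ b) (hBt : 1 - t ≤ μ.real B) : |a - μ.real A| ≤ t := by
  have hab : a + b ≤ 1 :=
    le_of_tendsto' (ha.add hb) fun n => birkhoffAvg_add_birkhoffAvg_le_one hAB n
  have hAB1 : μ.real A + μ.real B ≤ 1 := (measureReal_union (μ := μ) hAB hB) ▸ measureReal_le_one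
  simpa using abs_sub_le_of_le_of_le (ge_of_tendsto' ha birkhoffAvg_nonneg) (by linarith : a ≤ t)
    measureReal_nonneg (by linarith : μ.real A ≤ t)

end TimeAverageOfSet

theorem stmt_5_general {Γ : Type*} [MeasurableSpace Γ] (μ : Measure Γ) [IsProbabilityMeasure μ]
    (T : Γ → Γ) (hT : MeasurePreserving T μ μ)
    (ε : ℝ) (hε0 : 0 < ε) (hε1 : ε ≤ 1)
    (n : ℕ) (M : Fin n → Set Γ) (hMmeas : ∀ i, MeasurableSet (M i))
    (hMdisj : Pairwise (Function.onFun Disjoint M))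
    (i₀ : Fin n) (hEq : μ (M i₀) = ENNReal.ofReal (1 - ε)) :
    ∃ G : Set Γ, MeasurableSet G ∧ ENNReal.ofReal (1 - Real.sqrt ε) < μ G ∧
      ∀ x ∈ G, ∀ i : Fin n, ∃ L : ℝ,
        Tendsto (fun m => birkhoffAvg T (M i) m x) atTop (nhds L) ∧
        |L - (μ (M i)).toReal| ≤ Real.sqrt ε := by
  have hμ₀ : μ.real (M i₀) = 1 - ε := by
    rw [measureReal_def, hEq, ENNReal.toReal_ofReal (by linarith)]
  have hε : 1 - √ε ≤ μ.real (M i₀) := by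
    rw [hμ₀]
    linarith [Real.le_sqrt_self_iff.2 hε1]
  set conv := ⋂ i, {x | ∃ L, Tendsto (birkhoffAvg T (M i) · x) atTop (𝓝 L)}
  set D := {x | limsup (birkhoffAvg T (M i₀) · x) atTop < 1 - √ε}
  have hconv : μ convᶜ = 0 := by
    rw [Set.compl_iInter]
    exact measure_iUnion_null fun i => ae_exists_tendsto_birkhoffAvg hT (hMmeas i)
  have hD : μ.real D < √ε := by
    have h := measureReal_limsup_birkhoffAvg_lt_mul_lt hT (hMmeas i₀) (Real.sqrt_nonneg ε)
      (by linarith)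
    rw [hμ₀, sub_sub_cancel] at h
    exact lt_of_mul_lt_mul_right (h.trans_eq (Real.mul_self_sqrt hε0.le).symm) (Real.sqrt_nonneg ε)
  have hDmeas : MeasurableSet D :=
    measurableSet_lt (.limsup (measurable_birkhoffAvg hT.measurable (hMmeas i₀))) measurable_const
  refine ⟨conv \ D, (MeasurableSet.iInter fun i => measurableSet_exists_tendsto
      (measurable_birkhoffAvg hT.measurable (hMmeas i))).diff hDmeas,
    ofReal_one_sub_lt_measure_diff hconv hDmeas hD (Real.sqrt_le_one.2 hε1), ?_⟩
  rintro x ⟨hx, hxD⟩ i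
  obtain ⟨L, hL⟩ := Set.mem_iInter.1 hx i
  obtain ⟨L₀, hL₀⟩ := Set.mem_iInter.1 hx i₀
  have hL₀ε : 1 - √ε ≤ L₀ := hL₀.limsup_eq ▸ not_lt.1 hxD
  refine ⟨L, hL, ?_⟩
  rcases eq_or_ne i i₀ with rfl | hi
  · exact abs_sub_measureReal_le_of_one_sub_le hL (tendsto_nhds_unique hL₀ hL ▸ hL₀ε) hε
  · exact abs_sub_measureReal_le_of_disjoint (hMdisj hi) (hMmeas i₀) hL hL₀ hL₀ε hε

theorem stmt_5 {Γ : Type*} [MeasurableSpace Γ] (μ : Measure Γ) [IsProbabilityMeasure μ]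
    (T : Γ → Γ) (hT : MeasurePreserving T μ μ)
    (ε : ℝ) (hε0 : 0 < ε) (hε1 : ε ≤ 1)
    (n : ℕ) (M : Fin n → Set Γ) (hMmeas : ∀ i, MeasurableSet (M i))
    (hMdisj : Pairwise (Function.onFun Disjoint M))
    (hMcover : (⋃ i, M i) = Set.univ)
    (i₀ : Fin n) (hEq : μ (M i₀) = ENNReal.ofReal (1 - ε)) :
    ∃ G : Set Γ, MeasurableSet G ∧ ENNReal.ofReal (1 - Real.sqrt ε) < μ G ∧
      ∀ x ∈ G, ∀ i : Fin n, ∃ L : ℝ,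
        Tendsto (fun m => birkhoffAvg T (M i) m x) atTop (nhds L) ∧
        |L - (μ (M i)).toReal| ≤ Real.sqrt ε :=
  stmt_5_general μ T hT ε hε0 hε1 n M hMmeas hMdisj i₀ hEq
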